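/- Let τ > 0 and τ' > 0 and let t₋₂ < t₋₁ < t₀ < t₁ be real time nodes with steps k₁ = t₁ − t₀, k₀ = t₀ − t₋₁, k₋₁ = t₋₁ − t₋₂ satisfying k₁/k₀ = τ and k₀/k₋₁ = τ'. Then for every real polynomial p of degree at most 2, γ₃·(p(t₁) − p(t₀)) − γ₂·(p(t₀) − p(t₋₁)) + γ₁·(p(t₋₁) − p(t₋₂)) = 0; that is, the time-filter correction appearing in the equivalent form Φ̂ⁿ⁺¹ = Φⁿ⁺¹ + γ₃δΦⁿ⁺¹ − γ₂δΦⁿ + γ₁δΦⁿ⁻¹ annihilates quadratic polynomials. -/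

import Mathlib

/-!
The combination is a linear functional of the point values of `p`, so it annihilates all
polynomials of degree `≤ 2` as soon as it annihilates `1`, `t` and `t²`. It annihilates
constants because it only involves differences. Measuring the nodes from `t₀` in units of `k₀`,
`t₁ = t₀ + τ k₀`, `t₋₁ = t₀ - k₀`, `t₋₂ = t₀ - k₀ - k₀ / τ'`, the conditions for `t` and `t²`
become two rational identities in `τ, τ'` alone.
-/

/-- BDF2-TF γ-coefficients. -/
noncomputable def gamma3 (τ τ' : ℝ) : ℝ :=
  τ * τ' * (1 + τ) / ((1 + 2 * τ) * (1 + τ' * (1 + τ)))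
noncomputable def gamma2 (τ τ' : ℝ) : ℝ :=
  τ ^ 2 * τ' * (1 + τ) * (1 + τ' * (2 + τ)) /
    ((1 + 2 * τ) * (1 + τ') * (1 + τ' * (1 + τ)))
noncomputable def gamma1 (τ τ' : ℝ) : ℝ :=
  τ ^ 2 * τ' ^ 3 * (1 + τ) ^ 2 / ((1 + 2 * τ) * (1 + τ') * (1 + τ' * (1 + τ)))

open Polynomial Finset

theorem Polynomial.sum_mul_eval_eq_zero_of_sum_mul_pow_eq_zero {R ι : Type*} [CommRing R]
    (s : Finset ι) (w x : ι → R) {n : ℕ} (hmom : ∀ j ≤ n, ∑ i ∈ s, w i * x i ^ j = 0)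
    {p : R[X]} (hp : p.natDegree ≤ n) : ∑ i ∈ s, w i * p.eval (x i) = 0 := by
  calc ∑ i ∈ s, w i * p.eval (x i)
      = ∑ i ∈ s, ∑ j ∈ range (n + 1), p.coeff j * (w i * x i ^ j) := by
        refine sum_congr rfl fun i _ => ?_
        rw [eval_eq_sum_range' (Nat.lt_succ_of_le hp), mul_sum]
        exact sum_congr rfl fun j _ => by ring
    _ = ∑ j ∈ range (n + 1), p.coeff j * ∑ i ∈ s, w i * x i ^ j := by
        rw [sum_comm]; simp only [mul_sum]
    _ = 0 := sum_eq_zero fun j hj => by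
        rw [hmom j (Nat.lt_succ_iff.mp (mem_range.mp hj)), mul_zero]

section
variable {τ τ' : ℝ}

theorem gamma_first_moment (hτ : 0 < τ) (hτ' : 0 < τ') :
    gamma3 τ τ' * τ - gamma2 τ τ' + gamma1 τ τ' / τ' = 0 := by
  unfold gamma3 gamma2 gamma1
  field_simp
  ring

theorem gamma_second_moment (hτ : 0 < τ) (hτ' : 0 < τ') :
    gamma3 τ τ' * τ ^ 2 + gamma2 τ τ' - gamma1 τ τ' * (2 / τ' + 1 / τ' ^ 2) = 0 := by
  unfold gamma3 gamma2 gamma1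
  field_simp
  ring
end

theorem bdf2tf_gamma_annihilates_quadratics_general
    (τ τ' : ℝ) (hτ : 0 < τ) (hτ' : 0 < τ')
    (tm2 tm1 t0 t1 : ℝ)
    (k1 k0 km1 : ℝ) (hk1 : k1 = t1 - t0) (hk0 : k0 = t0 - tm1) (hkm1 : km1 = tm1 - tm2)
    (hr1 : k1 / k0 = τ) (hr2 : k0 / km1 = τ')
    (p : Polynomial ℝ) (hp : p.degree ≤ 2) :
    gamma3 τ τ' * (p.eval t1 - p.eval t0) - gamma2 τ τ' * (p.eval t0 - p.eval tm1)
      + gamma1 τ τ' * (p.eval tm1 - p.eval tm2) = 0 := by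
  have hk0_ne : k0 ≠ 0 := (div_ne_zero_iff.mp (hr1 ▸ hτ.ne')).2
  have hkm1_ne : km1 ≠ 0 := (div_ne_zero_iff.mp (hr2 ▸ hτ'.ne')).2
  have ht1 : t1 = t0 + τ * k0 := by rw [← hr1]; field_simp; linarith
  have htm1 : tm1 = t0 - k0 := by linarith
  have htm2 : tm2 = t0 - k0 - k0 / τ' := by rw [← hr2]; field_simp; linarith
  have hmom₁ := gamma_first_moment hτ hτ'
  have hmom₂ := gamma_second_moment hτ hτ'
  have key := sum_mul_eval_eq_zero_of_sum_mul_pow_eq_zero univ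
    ![gamma3 τ τ', -(gamma3 τ τ' + gamma2 τ τ'), gamma2 τ τ' + gamma1 τ τ', -gamma1 τ τ']
    ![t1, t0, tm1, tm2] (n := 2) ?_ (natDegree_le_of_degree_le hp)
  · simp only [Fin.sum_univ_four, Matrix.cons_val] at key
    linear_combination key
  intro j hj
  simp only [Fin.sum_univ_four, Matrix.cons_val]
  rw [ht1, htm1, htm2]
  interval_cases j
  · ring
  · linear_combination k0 * hmom₁
  · linear_combination 2 * t0 * k0 * hmom₁ + k0 ^ 2 * hmom₂

/-- The time-filter correction appearing in the equivalent form
`Φ̂ⁿ⁺¹ = Φⁿ⁺¹ + γ₃δΦⁿ⁺¹ − γ₂δΦⁿ + γ₁δΦⁿ⁻¹` annihilates quadratic polynomials. -/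
theorem bdf2tf_gamma_annihilates_quadratics
    (τ τ' : ℝ) (hτ : 0 < τ) (hτ' : 0 < τ')
    (tm2 tm1 t0 t1 : ℝ) (h1 : tm2 < tm1) (h2 : tm1 < t0) (h3 : t0 < t1)
    (k1 k0 km1 : ℝ) (hk1 : k1 = t1 - t0) (hk0 : k0 = t0 - tm1) (hkm1 : km1 = tm1 - tm2)
    (hr1 : k1 / k0 = τ) (hr2 : k0 / km1 = τ')
    (p : Polynomial ℝ) (hp : p.degree ≤ 2) :
    gamma3 τ τ' * (p.eval t1 - p.eval t0) - gamma2 τ τ' * (p.eval t0 - p.eval tm1)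
      + gamma1 τ τ' * (p.eval tm1 - p.eval tm2) = 0 :=
  bdf2tf_gamma_annihilates_quadratics_general τ τ' hτ hτ' tm2 tm1 t0 t1 k1 k0 km1 hk1 hk0 hkm1 hr1
    hr2 p hp
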